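/- Let (A_n)_{n=1}^∞ be a sequence of subsets of the Cantor set C with ⋃_{n=1}^∞ A_n = C. For each n let X_n denote the set C equipped with the topology generated by the standard (subspace) topology of C together with the singletons {x} for x ∈ A_n, and let X = ∏_{n=1}^∞ X_n with the product topology. Then for every function v : C → ℝ of the first Baire class (with respect to the standard topology of C) there exists a continuous function u : X → ℝ such that u(a,a,a,…) = v(a) for every a ∈ C. -/

import Mathlib

open Filter Topology

/-- A map is of the first Baire class: a pointwise limit of continuous maps. -/
def BaireOne {X Y : Type*} [TopologicalSpace X] [TopologicalSpace Y] (f : X → Y) : Prop :=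
  ∃ g : ℕ → X → Y, (∀ n, Continuous (g n)) ∧
    ∀ x, Tendsto (fun n => g n x) atTop (𝓝 (f x))

/-- The topology on the Cantor set generated by the standard (subspace) topology together
with the singletons of points of `A`. -/
def refinedTop (A : Set ↥cantorSet) : TopologicalSpace ↥cantorSet :=
  TopologicalSpace.generateFrom
    ({U : Set ↥cantorSet | IsOpen U} ∪ (fun x => ({x} : Set ↥cantorSet)) '' A)

/-- The product topology on `∏ₙ Xₙ` where `Xₙ` is the Cantor set with the topology refined
by the singletons of `A n`. -/
def refinedProdTop (A : ℕ → Set ↥cantorSet) : TopologicalSpace (ℕ → ↥cantorSet) :=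
  @Pi.topologicalSpace ℕ (fun _ => ↥cantorSet) (fun n => refinedTop (A n))

noncomputable section StmtAux
open Set Metric TopologicalSpace
abbrev CS : Type := ↥cantorSet
def CSr (B : Set CS) : Type := CS
instance (B : Set CS) : TopologicalSpace (CSr B) := refinedTop B
def XA (A : ℕ → Set CS) : Type := ℕ → CS
instance (A : ℕ → Set CS) : TopologicalSpace (XA A) := refinedProdTop A
lemma refinedTop_le (B : Set CS) : refinedTop B ≤ (inferInstance : TopologicalSpace CS) := by
  conv_rhs => rw [← generateFrom_setOf_isOpen (inferInstance : TopologicalSpace CS)]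
  exact generateFrom_anti Set.subset_union_left
def toStd (B : Set CS) : CSr B → CS := fun x => x
lemma continuous_toStd (B : Set CS) : Continuous (toStd B) :=
  continuous_id_of_le (refinedTop_le B)
lemma isOpen_pin {B : Set CS} {w : CS} (hw : w ∈ B) : IsOpen ({w} : Set (CSr B)) :=
  isOpen_generateFrom_of_mem (Or.inr ⟨w, hw, rfl⟩)
def ev (A : ℕ → Set CS) (n : ℕ) : XA A → CSr (A n) := fun y => y n
lemma continuous_ev (A : ℕ → Set CS) (n : ℕ) : Continuous (ev A n) := by
  show Continuous[⨅ m, TopologicalSpace.induced (fun y : ℕ → CS => y m) (refinedTop (A m)),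
    refinedTop (A n)] (ev A n)
  exact continuous_iInf_dom (i := n) continuous_induced_dom
lemma continuous_evStd (A : ℕ → Set CS) (n : ℕ) :
    Continuous (fun y : XA A => (y n : CS)) :=
  (continuous_toStd (A n)).comp (continuous_ev A n)
lemma isOpen_pinX (A : ℕ → Set CS) {n : ℕ} {w : CS} (hw : w ∈ A n) :
    IsOpen {y : XA A | y n = w} := by
  have : {y : XA A | y n = w} = (ev A n) ⁻¹' ({w} : Set (CSr (A n))) := rfl
  rw [this]
  exact (isOpen_pin hw).preimage (continuous_ev A n)

/-! ### the bump function Λ -/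

def Lam (x : ℝ) : ℝ := max 0 (min 1 x)

lemma Lam_cont : Continuous Lam := continuous_const.max (continuous_const.min continuous_id)
lemma Lam_nonneg (x : ℝ) : 0 ≤ Lam x := le_max_left _ _
lemma Lam_le_one (x : ℝ) : Lam x ≤ 1 := max_le zero_le_one (min_le_left _ _)
lemma Lam_of_nonpos {x : ℝ} (h : x ≤ 0) : Lam x = 0 :=
  max_eq_left ((min_le_right _ _).trans h)
lemma Lam_of_one_le {x : ℝ} (h : 1 ≤ x) : Lam x = 1 := by
  rw [Lam, min_eq_left h, max_eq_right zero_le_one]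

/-! ### the diagonal-deviation function D -/

def DD (A : ℕ → Set CS) (y : XA A) : ℝ :=
  ∑' j : ℕ, (2⁻¹ : ℝ) ^ (j + 1) * min 1 (dist (y (j + 1)) (y 0))

lemma DD_term_nonneg (A : ℕ → Set CS) (y : XA A) (j : ℕ) :
    0 ≤ (2⁻¹ : ℝ) ^ (j + 1) * min 1 (dist (y (j + 1)) (y 0)) :=
  mul_nonneg (by positivity) (le_min zero_le_one dist_nonneg)

lemma DD_term_le (A : ℕ → Set CS) (y : XA A) (j : ℕ) :
    (2⁻¹ : ℝ) ^ (j + 1) * min 1 (dist (y (j + 1)) (y 0)) ≤ (2⁻¹ : ℝ) ^ (j + 1) := by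
  nth_rewrite 2 [← mul_one ((2⁻¹ : ℝ) ^ (j + 1))]
  exact mul_le_mul_of_nonneg_left (min_le_left _ _) (by positivity)

lemma geom_summable : Summable (fun j : ℕ => (2⁻¹ : ℝ) ^ (j + 1)) := by
  simp_rw [pow_succ']
  exact (summable_geometric_of_lt_one (by norm_num) (by norm_num)).mul_left _

lemma DD_summable (A : ℕ → Set CS) (y : XA A) :
    Summable (fun j : ℕ => (2⁻¹ : ℝ) ^ (j + 1) * min 1 (dist (y (j + 1)) (y 0))) :=
  Summable.of_nonneg_of_le (DD_term_nonneg A y) (DD_term_le A y) geom_summable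

lemma DD_nonneg (A : ℕ → Set CS) (y : XA A) : 0 ≤ DD A y :=
  tsum_nonneg (DD_term_nonneg A y)

lemma geom_sum_eq_one : ∑' j : ℕ, (2⁻¹ : ℝ) ^ (j + 1) = 1 := by
  simp_rw [pow_succ']
  rw [tsum_mul_left, tsum_geometric_of_lt_one (by norm_num) (by norm_num)]
  norm_num

lemma DD_le_one (A : ℕ → Set CS) (y : XA A) : DD A y ≤ 1 := by
  rw [← geom_sum_eq_one]
  exact Summable.tsum_le_tsum (DD_term_le A y) (DD_summable A y) geom_summable

lemma DD_cont (A : ℕ → Set CS) : Continuous (DD A) := by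
  apply continuous_tsum
    (fun j => ?_) geom_summable (fun j y => ?_)
  · exact continuous_const.mul
      (continuous_const.min ((continuous_evStd A (j+1)).dist (continuous_evStd A 0)))
  · rw [Real.norm_eq_abs, abs_of_nonneg (DD_term_nonneg A y j)]
    exact DD_term_le A y j

lemma DD_diag (A : ℕ → Set CS) (a : CS) : DD A (fun _ => a) = 0 := by
  have : ∀ j : ℕ, (2⁻¹ : ℝ) ^ (j + 1) * min 1 (dist ((fun _ : ℕ => a) (j + 1)) ((fun _ : ℕ => a) 0)) = 0 := by
    intro j; simp
  unfold DD; rw [tsum_congr this, tsum_zero]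

lemma DD_single_le (A : ℕ → Set CS) (y : XA A) (p : ℕ) :
    (2⁻¹ : ℝ) ^ (p + 1) * min 1 (dist (y (p + 1)) (y 0)) ≤ DD A y :=
  Summable.le_tsum (DD_summable A y) p (fun j _ => DD_term_nonneg A y j)

lemma eq_diag_of_DD_eq_zero {A : ℕ → Set CS} {y : XA A} (h : DD A y = 0) (j : ℕ) :
    y j = y 0 := by
  cases j with
  | zero => rfl
  | succ p =>
    by_contra hne
    have hd : 0 < dist (y (p + 1)) (y 0) := dist_pos.2 hne
    have h1 : 0 < (2⁻¹ : ℝ) ^ (p + 1) * min 1 (dist (y (p + 1)) (y 0)) :=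
      mul_pos (by positivity) (lt_min one_pos hd)
    have := DD_single_le A y p
    rw [h] at this
    linarith

/-! ### the indicator-like function Θ -/

open Classical in
def Th (A : ℕ → Set CS) (H : Set CS) (σ : ℝ) (y : XA A) : ℝ :=
  if y 0 ∈ H then 1
  else 1 - Lam (1 - DD A y / min σ (infDist (y 0) H ^ 2))

lemma Th_of_mem {A : ℕ → Set CS} {H : Set CS} {σ : ℝ} {y : XA A} (h : y 0 ∈ H) :
    Th A H σ y = 1 := if_pos h

lemma Th_nonneg (A : ℕ → Set CS) (H : Set CS) (σ : ℝ) (y : XA A) : 0 ≤ Th A H σ y := by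
  rw [Th]; split
  · norm_num
  · have := Lam_le_one (1 - DD A y / min σ (infDist (y 0) H ^ 2)); linarith

lemma Th_le_one (A : ℕ → Set CS) (H : Set CS) (σ : ℝ) (y : XA A) : Th A H σ y ≤ 1 := by
  rw [Th]; split
  · norm_num
  · have := Lam_nonneg (1 - DD A y / min σ (infDist (y 0) H ^ 2)); linarith

lemma Th_diag_of_not_mem {A : ℕ → Set CS} {H : Set CS} {σ : ℝ} {a : CS} (h : a ∉ H) :
    Th A H σ (fun _ => a) = 0 := by
  unfold Th; rw [if_neg h, DD_diag, zero_div, sub_zero, Lam_of_one_le le_rfl, sub_self]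

lemma Th_eq_one_of_le {A : ℕ → Set CS} {H : Set CS} {σ : ℝ} {y : XA A}
    (hθ : 0 < min σ (infDist (y 0) H ^ 2))
    (hle : min σ (infDist (y 0) H ^ 2) ≤ DD A y) : Th A H σ y = 1 := by
  rw [Th]; split
  · rfl
  · rw [Lam_of_nonpos, sub_zero]
    have h1 : (1:ℝ) ≤ DD A y / min σ (infDist (y 0) H ^ 2) := (one_le_div hθ).2 hle
    linarith


lemma Th_cont (A : ℕ → Set CS) (hA : (⋃ n, A n) = Set.univ) {H : Set CS} (hH : IsClosed H)
    (hne : H.Nonempty) {σ : ℝ} (hσ : 0 < σ) : Continuous (Th A H σ) := by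
  rw [continuous_iff_continuousAt]
  intro y
  by_cases hy0 : y 0 ∈ H
  · -- find an open V ∋ y on which Th ≡ 1
    obtain ⟨V, hVopen, hyV, hV1⟩ :
        ∃ V : Set (XA A), IsOpen V ∧ y ∈ V ∧ ∀ z ∈ V, Th A H σ z = 1 := by
      by_cases hD : DD A y = 0
      · -- y is the diagonal of w := y 0
        have hdiag : ∀ j, y j = y 0 := eq_diag_of_DD_eq_zero hD
        have hw : y 0 ∈ ⋃ n, A n := by rw [hA]; trivial
        obtain ⟨p, hp⟩ := mem_iUnion.1 hw
        rcases Nat.eq_zero_or_pos p with hp0 | hppos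
        · subst hp0
          refine ⟨{z | z 0 = y 0}, isOpen_pinX A hp, rfl, ?_⟩
          intro z hz
          exact Th_of_mem (by rw [show z 0 = y 0 from hz]; exact hy0)
        · obtain ⟨q, rfl⟩ : ∃ q, p = q + 1 := ⟨p - 1, (Nat.succ_pred_eq_of_pos hppos).symm⟩
          refine ⟨{z | z (q+1) = y 0} ∩ {z | dist (z 0) (y 0) < (2⁻¹ : ℝ) ^ (q + 2)},
            (isOpen_pinX A hp).inter ?_, ⟨hdiag (q+1), ?_⟩, ?_⟩
          · have : {z : XA A | dist (z 0) (y 0) < (2⁻¹ : ℝ) ^ (q + 2)} =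
                (fun z : XA A => (z 0 : CS)) ⁻¹' (Metric.ball (y 0) ((2⁻¹ : ℝ) ^ (q + 2))) := rfl
            rw [this]
            exact Metric.isOpen_ball.preimage (continuous_evStd A 0)
          · show dist (y 0) (y 0) < (2⁻¹ : ℝ) ^ (q + 2)
            rw [dist_self]; positivity
          · rintro z ⟨hzp, hzd⟩
            by_cases hz0 : z 0 ∈ H
            · exact Th_of_mem hz0
            · have hr0 : 0 < infDist (z 0) H := by
                have : infDist (z 0) H ≠ 0 := fun h0 => hz0 ((hH.mem_iff_infDist_zero hne).2 h0)
                exact lt_of_le_of_ne infDist_nonneg (Ne.symm this)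
              apply Th_eq_one_of_le (lt_min hσ (pow_pos hr0 2))
              have h1 : infDist (z 0) H ≤ dist (z 0) (y 0) := infDist_le_dist_of_mem hy0
              have h2 : (2⁻¹ : ℝ) ^ (q+1) * min 1 (dist (z (q+1)) (z 0)) ≤ DD A z :=
                DD_single_le A z q
              rw [hzp] at h2
              have hd1 : dist (y 0) (z 0) < (2⁻¹ : ℝ) ^ (q + 2) := by
                rw [dist_comm]; exact hzd
              have hdle1 : dist (y 0) (z 0) ≤ 1 := by
                have : (2⁻¹ : ℝ) ^ (q + 2) ≤ 1 := by
                  apply pow_le_one₀ <;> norm_num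
                linarith
              rw [min_eq_right hdle1] at h2
              have hq2 : (2⁻¹ : ℝ) ^ (q + 2) = (2⁻¹ : ℝ) ^ (q+1) * 2⁻¹ := by ring
              have key : infDist (z 0) H ^ 2 ≤ DD A z := by
                have e1 : infDist (z 0) H ^ 2 ≤ dist (z 0) (y 0) ^ 2 := by
                  apply pow_le_pow_left₀ infDist_nonneg h1
                have e2 : dist (z 0) (y 0) ^ 2 ≤ (2⁻¹ : ℝ) ^ (q + 2) * dist (z 0) (y 0) := by
                  rw [pow_two]
                  apply mul_le_mul_of_nonneg_right (le_of_lt hzd) dist_nonneg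
                have e3 : (2⁻¹ : ℝ) ^ (q + 2) * dist (z 0) (y 0) ≤
                    (2⁻¹ : ℝ) ^ (q+1) * dist (y 0) (z 0) := by
                  rw [hq2, dist_comm (y 0) (z 0)]
                  nlinarith [dist_nonneg (x := z 0) (y := y 0), pow_nonneg (by norm_num : (0:ℝ) ≤ 2⁻¹) (q+1)]
                linarith
              exact le_trans (min_le_right _ _) key
      · -- DD A y > 0
        have hDpos : 0 < DD A y := lt_of_le_of_ne (DD_nonneg A y) (Ne.symm hD)
        refine ⟨{z | DD A y / 2 < DD A z} ∩ {z | dist (z 0) (y 0) < DD A y / 4},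
          ?_, ⟨by simpa using by linarith, by simp [dist_self]; positivity⟩, ?_⟩
        · apply IsOpen.inter
          · exact (isOpen_lt continuous_const (DD_cont A))
          · have : {z : XA A | dist (z 0) (y 0) < DD A y / 4} =
                (fun z : XA A => (z 0 : CS)) ⁻¹' (Metric.ball (y 0) (DD A y / 4)) := rfl
            rw [this]
            exact Metric.isOpen_ball.preimage (continuous_evStd A 0)
        · rintro z ⟨hz1, hz2⟩
          by_cases hz0 : z 0 ∈ H
          · exact Th_of_mem hz0
          · have hr0 : 0 < infDist (z 0) H := by
              have : infDist (z 0) H ≠ 0 := fun h0 => hz0 ((hH.mem_iff_infDist_zero hne).2 h0)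
              exact lt_of_le_of_ne infDist_nonneg (Ne.symm this)
            apply Th_eq_one_of_le (lt_min hσ (pow_pos hr0 2))
            have h1 : infDist (z 0) H ≤ dist (z 0) (y 0) := infDist_le_dist_of_mem hy0
            have hDle : DD A y ≤ 1 := DD_le_one A y
            have hz1' : DD A y / 2 < DD A z := hz1
            have hz2' : dist (z 0) (y 0) < DD A y / 4 := hz2
            have key : infDist (z 0) H ^ 2 ≤ DD A z := by
              have e1 : infDist (z 0) H ^ 2 ≤ dist (z 0) (y 0) ^ 2 :=
                pow_le_pow_left₀ infDist_nonneg h1 2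
              nlinarith [dist_nonneg (x := z 0) (y := y 0), hz1', hz2', hDpos, hDle, e1]
            exact le_trans (min_le_right _ _) key
    have h1 : Th A H σ y = 1 := Th_of_mem hy0
    have : (fun _ : XA A => (1:ℝ)) =ᶠ[nhds y] Th A H σ :=
      Filter.eventuallyEq_of_mem (hVopen.mem_nhds hyV) (fun z hz => (hV1 z hz).symm)
    exact continuousAt_const.congr this
  · -- y 0 ∉ H : locally given by a continuous formula
    have hr : 0 < infDist (y 0) H := by
      have : infDist (y 0) H ≠ 0 := fun h0 => hy0 ((hH.mem_iff_infDist_zero hne).2 h0)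
      exact lt_of_le_of_ne infDist_nonneg (Ne.symm this)
    set V : Set (XA A) := {z | dist (z 0) (y 0) < infDist (y 0) H / 2} with hV
    have hVopen : IsOpen V := by
      have : V = (fun z : XA A => (z 0 : CS)) ⁻¹' (Metric.ball (y 0) (infDist (y 0) H / 2)) := rfl
      rw [this]
      exact Metric.isOpen_ball.preimage (continuous_evStd A 0)
    have hyV : y ∈ V := by show dist (y 0) (y 0) < _; rw [dist_self]; positivity
    have hVnot : ∀ z ∈ V, z 0 ∉ H := by
      intro z hz hmem
      have h1 : infDist (y 0) H ≤ dist (y 0) (z 0) := infDist_le_dist_of_mem hmem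
      have hz' : dist (z 0) (y 0) < infDist (y 0) H / 2 := hz
      rw [dist_comm] at hz'
      linarith
    have hden : ContinuousAt (fun z : XA A => min σ (infDist (z 0) H ^ 2)) y :=
      (continuous_const.min
        (((continuous_infDist_pt H).comp (continuous_evStd A 0)).pow 2)).continuousAt
    have hdenne : min σ (infDist (y 0) H ^ 2) ≠ 0 := ne_of_gt (lt_min hσ (pow_pos hr 2))
    have hF : ContinuousAt
        (fun z : XA A => 1 - Lam (1 - DD A z / min σ (infDist (z 0) H ^ 2))) y := by
      apply ContinuousAt.sub continuousAt_const
      apply Lam_cont.continuousAt.comp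
      apply ContinuousAt.sub continuousAt_const
      exact ((DD_cont A).continuousAt).div hden hdenne
    apply hF.congr
    exact Filter.eventuallyEq_of_mem (hVopen.mem_nhds hyV)
      (fun z hz => by rw [Th, if_neg (hVnot z hz)])


/-- `Th` is 1 as soon as the scale `σ` is below `DD`. -/
lemma Th_eq_one_of_sigma_le {A : ℕ → Set CS} {H : Set CS} (hH : IsClosed H) (hne : H.Nonempty)
    {σ : ℝ} (hσ : 0 < σ) {z : XA A} (hle : σ ≤ DD A z) : Th A H σ z = 1 := by
  by_cases hz0 : z 0 ∈ H
  · exact Th_of_mem hz0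
  · have hr0 : 0 < infDist (z 0) H := by
      have : infDist (z 0) H ≠ 0 := fun h0 => hz0 ((hH.mem_iff_infDist_zero hne).2 h0)
      exact lt_of_le_of_ne infDist_nonneg (Ne.symm this)
    exact Th_eq_one_of_le (lt_min hσ (pow_pos hr0 2)) ((min_le_left _ _).trans hle)

/-- `Th` is 1 on a pinned neighbourhood of the diagonal of a point of `H`. -/
lemma Th_eq_one_pin {A : ℕ → Set CS} {H : Set CS} (hH : IsClosed H) (hne : H.Nonempty)
    {σ : ℝ} (hσ : 0 < σ) {w : CS} (hw : w ∈ H) {z : XA A} {q : ℕ}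
    (hzp : z (q + 1) = w) (hzd : dist (z 0) w < (2⁻¹ : ℝ) ^ (q + 2)) : Th A H σ z = 1 := by
  by_cases hz0 : z 0 ∈ H
  · exact Th_of_mem hz0
  · have hr0 : 0 < infDist (z 0) H := by
      have : infDist (z 0) H ≠ 0 := fun h0 => hz0 ((hH.mem_iff_infDist_zero hne).2 h0)
      exact lt_of_le_of_ne infDist_nonneg (Ne.symm this)
    apply Th_eq_one_of_le (lt_min hσ (pow_pos hr0 2))
    have h1 : infDist (z 0) H ≤ dist (z 0) w := infDist_le_dist_of_mem hw
    have h2 : (2⁻¹ : ℝ) ^ (q+1) * min 1 (dist (z (q+1)) (z 0)) ≤ DD A z := DD_single_le A z q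
    rw [hzp] at h2
    have hdle1 : dist w (z 0) ≤ 1 := by
      have : (2⁻¹ : ℝ) ^ (q + 2) ≤ 1 := by apply pow_le_one₀ <;> norm_num
      rw [dist_comm]; linarith
    rw [min_eq_right hdle1] at h2
    have key : infDist (z 0) H ^ 2 ≤ DD A z := by
      have e1 : infDist (z 0) H ^ 2 ≤ dist (z 0) w ^ 2 :=
        pow_le_pow_left₀ infDist_nonneg h1 2
      have e2 : dist (z 0) w ^ 2 ≤ (2⁻¹ : ℝ) ^ (q + 2) * dist (z 0) w := by
        rw [pow_two]
        exact mul_le_mul_of_nonneg_right (le_of_lt hzd) dist_nonneg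
      have e3 : (2⁻¹ : ℝ) ^ (q + 2) * dist (z 0) w ≤ (2⁻¹ : ℝ) ^ (q+1) * dist w (z 0) := by
        have hq2 : (2⁻¹ : ℝ) ^ (q + 2) = (2⁻¹ : ℝ) ^ (q+1) * 2⁻¹ := by ring
        rw [hq2, dist_comm (z 0) w]
        nlinarith [dist_nonneg (x := w) (y := z 0),
          pow_nonneg (by norm_num : (0:ℝ) ≤ 2⁻¹) (q+1)]
      linarith
    exact le_trans (min_le_right _ _) key

/-! ### the level machinery -/

def Thm (A : ℕ → Set CS) (K : ℕ → Set CS) (m : ℕ) : XA A → ℝ :=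
  Th A (K m) ((4⁻¹ : ℝ) ^ m)

def Bm (A : ℕ → Set CS) (K : ℕ → Set CS) : ℕ → XA A → ℝ
  | 0 => Thm A K 0
  | (m+1) => fun y => max (Bm A K m y) (Thm A K (m+1) y)

def wg (A : ℕ → Set CS) (K : ℕ → Set CS) : ℕ → XA A → ℝ
  | 0 => Bm A K 0
  | (m+1) => fun y => Bm A K (m+1) y - Bm A K m y

def UL (A : ℕ → Set CS) (K : ℕ → Set CS) (h : ℕ → CS → ℝ) (y : XA A) : ℝ :=
  ∑' m : ℕ, wg A K m y * h m (y 0)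

section Level

variable {A : ℕ → Set CS} (hA : (⋃ n, A n) = Set.univ) {K : ℕ → Set CS}
  (hKc : ∀ m, IsClosed (K m)) (hKn : ∀ m, (K m).Nonempty) (hKm : Monotone K)
  {h : ℕ → CS → ℝ} (hh : ∀ m, Continuous (h m))

include hA hKc hKn in
lemma Thm_cont (m : ℕ) : Continuous (Thm A K m) :=
  Th_cont A hA (hKc m) (hKn m) (by positivity)

include hA hKc hKn in
lemma Bm_cont (m : ℕ) : Continuous (Bm A K m) := by
  induction m with
  | zero => exact Thm_cont hA hKc hKn 0
  | succ m ih => exact ih.max (Thm_cont hA hKc hKn (m+1))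

include hA hKc hKn in
lemma wg_cont (m : ℕ) : Continuous (wg A K m) := by
  cases m with
  | zero => exact Bm_cont hA hKc hKn 0
  | succ m => exact (Bm_cont hA hKc hKn (m+1)).sub (Bm_cont hA hKc hKn m)

lemma Bm_le_one (m : ℕ) (y : XA A) : Bm A K m y ≤ 1 := by
  induction m with
  | zero => exact Th_le_one _ _ _ _
  | succ m ih => exact max_le ih (Th_le_one _ _ _ _)

lemma Bm_nonneg (m : ℕ) (y : XA A) : 0 ≤ Bm A K m y := by
  induction m with
  | zero => exact Th_nonneg _ _ _ _
  | succ m ih => exact le_trans ih (le_max_left _ _)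

lemma Bm_mono {m m' : ℕ} (hmm : m ≤ m') (y : XA A) : Bm A K m y ≤ Bm A K m' y := by
  induction m' with
  | zero => rw [Nat.le_zero.1 hmm]
  | succ m' ih =>
    rcases Nat.lt_or_ge m (m'+1) with hlt | hge
    · exact le_trans (ih (Nat.lt_succ_iff.1 hlt)) (le_max_left _ _)
    · rw [Nat.le_antisymm hmm hge]

lemma Thm_le_Bm {j m : ℕ} (hjm : j ≤ m) (y : XA A) : Thm A K j y ≤ Bm A K m y := by
  have : Thm A K j y ≤ Bm A K j y := by
    cases j with
    | zero => exact le_refl _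
    | succ j => exact le_max_right _ _
  exact le_trans this (Bm_mono hjm y)

lemma wg_nonneg (m : ℕ) (y : XA A) : 0 ≤ wg A K m y := by
  cases m with
  | zero => exact Bm_nonneg 0 y
  | succ m => exact sub_nonneg.2 (Bm_mono (Nat.le_succ m) y)

lemma sum_wg (N : ℕ) (y : XA A) :
    ∑ m ∈ Finset.range (N + 1), wg A K m y = Bm A K N y := by
  induction N with
  | zero => simp [wg]
  | succ N ih => rw [Finset.sum_range_succ, ih]; show _ + (Bm A K (N+1) y - _) = _; ring

lemma Bm_eq_one {M m : ℕ} (hMm : M ≤ m) {y : XA A} (hy : Thm A K M y = 1) :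
    Bm A K m y = 1 :=
  le_antisymm (Bm_le_one m y) (hy ▸ Thm_le_Bm hMm y)

lemma wg_eq_zero {M m : ℕ} (hMm : M < m) {y : XA A} (hy : Thm A K M y = 1) :
    wg A K m y = 0 := by
  obtain ⟨m, rfl⟩ : ∃ q, m = q + 1 := ⟨m - 1, (Nat.succ_pred_eq_of_pos (Nat.lt_of_le_of_lt (Nat.zero_le M) hMm)).symm⟩
  show Bm A K (m+1) y - Bm A K m y = 0
  rw [Bm_eq_one (Nat.le_of_lt_succ hMm) hy, Bm_eq_one (le_trans (Nat.le_of_lt_succ hMm) (Nat.le_succ m)) hy]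
  ring

end Level


section Level2

variable {A : ℕ → Set CS} (hA : (⋃ n, A n) = Set.univ) {K : ℕ → Set CS}
  (hKc : ∀ m, IsClosed (K m)) (hKn : ∀ m, (K m).Nonempty) (hKm : Monotone K)
  {h : ℕ → CS → ℝ} (hh : ∀ m, Continuous (h m))

lemma UL_eq_sum {y : XA A} {M : ℕ} (hy : Thm A K M y = 1) :
    UL A K h y = ∑ m ∈ Finset.range (M + 1), wg A K m y * h m (y 0) := by
  apply tsum_eq_sum
  intro m hm
  rw [wg_eq_zero (by simpa using Finset.mem_range.not.1 hm) hy, zero_mul]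

open Classical in
include hKm in
lemma Bm_diag (a : CS) (m : ℕ) :
    Bm A K m (fun _ => a) = if a ∈ K m then 1 else 0 := by
  induction m with
  | zero =>
    show Thm A K 0 _ = _
    split
    · exact Th_of_mem (by assumption)
    · exact Th_diag_of_not_mem (by assumption)
  | succ m ih =>
    show max (Bm A K m _) (Thm A K (m+1) _) = _
    rw [ih]
    by_cases hm1 : a ∈ K (m+1)
    · rw [if_pos hm1, show Thm A K (m+1) (fun _ => a) = 1 from Th_of_mem hm1]
      rcases _root_.em (a ∈ K m) with hm | hm
      · rw [if_pos hm]; exact max_self 1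
      · rw [if_neg hm]; exact max_eq_right zero_le_one
    · have hm : a ∉ K m := fun hm => hm1 (hKm (Nat.le_succ m) hm)
      rw [if_neg hm1, if_neg hm,
        show Thm A K (m+1) (fun _ => a) = 0 from Th_diag_of_not_mem hm1]
      exact max_self 0

open Classical in
include hKm in
lemma UL_diag (a : CS) (hcov : ∃ m, a ∈ K m) :
    UL A K h (fun _ => a) = h (Nat.find hcov) a := by
  set M := Nat.find hcov with hMdef
  have haM : a ∈ K M := Nat.find_spec hcov
  have hTh : Thm A K M (fun _ => a) = 1 := Th_of_mem haM
  rw [UL_eq_sum hTh, Finset.sum_eq_single M]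
  · have hwg : wg A K M (fun _ => a) = 1 := by
      cases hM : M with
      | zero =>
        show Bm A K 0 _ = 1
        rw [Bm_diag hKm, if_pos (hM ▸ haM)]
      | succ q =>
        show Bm A K (q+1) _ - Bm A K q _ = 1
        have hq : a ∉ K q := Nat.find_min hcov (by omega)
        rw [Bm_diag hKm, Bm_diag hKm, if_pos (hM ▸ haM), if_neg hq]
        ring
    rw [hwg, one_mul]
  · intro m hmmem hmne
    have hmlt : m < M := by
      have := Finset.mem_range.1 hmmem; omega
    have hwg : wg A K m (fun _ => a) = 0 := by
      cases m with
      | zero =>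
        show Bm A K 0 _ = 0
        rw [Bm_diag hKm, if_neg (Nat.find_min hcov (by omega))]
      | succ q =>
        show Bm A K (q+1) _ - Bm A K q _ = 0
        rw [Bm_diag hKm, Bm_diag hKm, if_neg (Nat.find_min hcov (by omega)),
          if_neg (Nat.find_min hcov (by omega))]
        ring
    rw [hwg, zero_mul]
  · intro hM
    exact absurd (Finset.self_mem_range_succ M) hM

lemma UL_abs_le {c : ℝ} (hb : ∀ m t, |h m t| ≤ c) {y : XA A} (hcov : ∃ m, y 0 ∈ K m) :
    |UL A K h y| ≤ c := by
  obtain ⟨M, hM⟩ := hcov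
  have hc : 0 ≤ c := le_trans (abs_nonneg _) (hb 0 (y 0))
  have hTh : Thm A K M y = 1 := Th_of_mem hM
  rw [UL_eq_sum hTh]
  calc |∑ m ∈ Finset.range (M + 1), wg A K m y * h m (y 0)|
      ≤ ∑ m ∈ Finset.range (M + 1), |wg A K m y * h m (y 0)| :=
        Finset.abs_sum_le_sum_abs _ _
    _ ≤ ∑ m ∈ Finset.range (M + 1), wg A K m y * c := by
        apply Finset.sum_le_sum
        intro m _
        rw [abs_mul, abs_of_nonneg (wg_nonneg m y)]
        exact mul_le_mul_of_nonneg_left (hb m (y 0)) (wg_nonneg m y)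
    _ = Bm A K M y * c := by rw [← Finset.sum_mul, sum_wg]
    _ ≤ 1 * c := mul_le_mul_of_nonneg_right (Bm_le_one M y) hc
    _ = c := one_mul c

include hA hKc hKn hKm hh in
lemma UL_cont (hcov : ∀ t : CS, ∃ m, t ∈ K m) : Continuous (UL A K h) := by
  rw [continuous_iff_continuousAt]
  intro y
  obtain ⟨V, hVopen, hyV, N, hVN⟩ :
      ∃ V : Set (XA A), IsOpen V ∧ y ∈ V ∧ ∃ N, ∀ z ∈ V, Thm A K N z = 1 := by
    by_cases hD : DD A y = 0
    · have hdiag : ∀ j, y j = y 0 := eq_diag_of_DD_eq_zero hD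
      obtain ⟨M, haM⟩ := hcov (y 0)
      have hw : y 0 ∈ ⋃ n, A n := by rw [hA]; trivial
      obtain ⟨p, hp⟩ := mem_iUnion.1 hw
      rcases Nat.eq_zero_or_pos p with hp0 | hppos
      · subst hp0
        refine ⟨{z | z 0 = y 0}, isOpen_pinX A hp, rfl, M, ?_⟩
        intro z hz
        exact Th_of_mem (by rw [show z 0 = y 0 from hz]; exact haM)
      · obtain ⟨q, rfl⟩ : ∃ q, p = q + 1 := ⟨p - 1, (Nat.succ_pred_eq_of_pos hppos).symm⟩
        refine ⟨{z | z (q+1) = y 0} ∩ {z | dist (z 0) (y 0) < (2⁻¹ : ℝ) ^ (q + 2)},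
          (isOpen_pinX A hp).inter ?_, ⟨hdiag (q+1), ?_⟩, M, ?_⟩
        · have : {z : XA A | dist (z 0) (y 0) < (2⁻¹ : ℝ) ^ (q + 2)} =
              (fun z : XA A => (z 0 : CS)) ⁻¹' (Metric.ball (y 0) ((2⁻¹ : ℝ) ^ (q + 2))) := rfl
          rw [this]
          exact Metric.isOpen_ball.preimage (continuous_evStd A 0)
        · show dist (y 0) (y 0) < (2⁻¹ : ℝ) ^ (q + 2)
          rw [dist_self]; positivity
        · rintro z ⟨hzp, hzd⟩
          exact Th_eq_one_pin (hKc M) (hKn M) (by positivity) haM hzp hzd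
    · have hDpos : 0 < DD A y := lt_of_le_of_ne (DD_nonneg A y) (Ne.symm hD)
      obtain ⟨N, hN⟩ : ∃ n : ℕ, (4⁻¹ : ℝ) ^ n < DD A y / 2 :=
        exists_pow_lt_of_lt_one (by positivity) (by norm_num)
      refine ⟨{z | DD A y / 2 < DD A z}, isOpen_lt continuous_const (DD_cont A),
        by simpa using by linarith, N, ?_⟩
      intro z hz
      have hz' : DD A y / 2 < DD A z := hz
      exact Th_eq_one_of_sigma_le (hKc N) (hKn N) (by positivity) (by linarith)
  have hFc : Continuous (fun z : XA A => ∑ m ∈ Finset.range (N+1), wg A K m z * h m (z 0)) := by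
    apply continuous_finset_sum
    intro m _
    exact (wg_cont hA hKc hKn m).mul ((hh m).comp (continuous_evStd A 0))
  apply hFc.continuousAt.congr
  exact Filter.eventuallyEq_of_mem (hVopen.mem_nhds hyV)
    (fun z hz => (UL_eq_sum (hVN z hz)).symm)

end Level2


/-! ### clamping -/

def clampR (c x : ℝ) : ℝ := max (-c) (min c x)

lemma clampR_cont (c : ℝ) : Continuous (clampR c) :=
  continuous_const.max (continuous_const.min continuous_id)

lemma abs_clampR_le {c : ℝ} (hc : 0 ≤ c) (x : ℝ) : |clampR c x| ≤ c := by
  rw [abs_le]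
  constructor
  · exact le_max_left _ _
  · exact max_le (by linarith) (min_le_left _ _)

lemma clampR_dist {c x z : ℝ} (hz : |z| ≤ c) : |z - clampR c x| ≤ |z - x| := by
  have hz1 : -c ≤ z := neg_le_of_abs_le hz
  have hz2 : z ≤ c := le_of_abs_le hz
  rw [clampR]
  rcases le_total x c with hxc | hxc
  · rw [min_eq_right hxc]
    rcases le_total (-c) x with hcx | hcx
    · rw [max_eq_right hcx]
    · rw [max_eq_left hcx, abs_of_nonneg (by linarith), abs_of_nonneg (by linarith)]
      linarith
  · rw [min_eq_left hxc, max_eq_right (by linarith : -c ≤ c),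
      abs_of_nonpos (by linarith), abs_of_nonpos (by linarith)]
    linarith

/-! ### stabilization sets of a pointwise convergent sequence -/

def KK (g : ℕ → CS → ℝ) (δ : ℝ) (m : ℕ) : Set CS :=
  {t | ∀ i, m ≤ i → ∀ j, m ≤ j → dist (g i t) (g j t) ≤ δ}

lemma KK_closed {g : ℕ → CS → ℝ} (hg : ∀ n, Continuous (g n)) (δ : ℝ) (m : ℕ) :
    IsClosed (KK g δ m) := by
  have : KK g δ m =
      ⋂ i, ⋂ (_ : m ≤ i), ⋂ j, ⋂ (_ : m ≤ j), {t | dist (g i t) (g j t) ≤ δ} := by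
    ext t; simp [KK]
  rw [this]
  exact isClosed_iInter fun i => isClosed_iInter fun _ => isClosed_iInter fun j =>
    isClosed_iInter fun _ => isClosed_le ((hg i).dist (hg j)) continuous_const

lemma KK_mono (g : ℕ → CS → ℝ) (δ : ℝ) : Monotone (KK g δ) := by
  intro m m' hmm t ht i hi j hj
  exact ht i (le_trans hmm hi) j (le_trans hmm hj)

lemma KK_cover {v : CS → ℝ} {g : ℕ → CS → ℝ}
    (hgl : ∀ t, Filter.Tendsto (fun n => g n t) atTop (𝓝 (v t))) {δ : ℝ} (hδ : 0 < δ)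
    (t : CS) : ∃ m, t ∈ KK g δ m := by
  obtain ⟨N, hN⟩ := Metric.cauchySeq_iff.1 (hgl t).cauchySeq δ hδ
  exact ⟨N, fun i hi j hj => le_of_lt (hN i hi j hj)⟩

lemma KK_acc {v : CS → ℝ} {g : ℕ → CS → ℝ}
    (hgl : ∀ t, Filter.Tendsto (fun n => g n t) atTop (𝓝 (v t))) {δ : ℝ} {m : ℕ} {t : CS}
    (ht : t ∈ KK g δ m) : dist (v t) (g m t) ≤ δ := by
  have hl : Filter.Tendsto (fun i => dist (g i t) (g m t)) atTop (𝓝 (dist (v t) (g m t))) :=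
    ((hgl t).dist tendsto_const_nhds)
  apply le_of_tendsto hl
  filter_upwards [eventually_ge_atTop m] with i hi
  exact ht i hi m le_rfl

/-! ### the Baire-one witness of the diagonal value function -/

def chiK (K : ℕ → Set CS) (m n : ℕ) (t : CS) : ℝ := Lam (1 - n * infDist t (K m))

def cmax (K : ℕ → Set CS) : ℕ → ℕ → CS → ℝ
  | 0 => chiK K 0
  | (m+1) => fun n t => max (cmax K m n t) (chiK K (m+1) n t)

def swg (K : ℕ → Set CS) : ℕ → ℕ → CS → ℝ
  | 0 => cmax K 0
  | (m+1) => fun n t => cmax K (m+1) n t - cmax K m n t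

def snf (K : ℕ → Set CS) (h : ℕ → CS → ℝ) (n : ℕ) (t : CS) : ℝ :=
  ∑ m ∈ Finset.range (n+1), swg K m n t * h m t

lemma chiK_cont (K : ℕ → Set CS) (m n : ℕ) : Continuous (chiK K m n) :=
  Lam_cont.comp (continuous_const.sub (continuous_const.mul (continuous_infDist_pt (K m))))

lemma cmax_cont (K : ℕ → Set CS) (m n : ℕ) : Continuous (cmax K m n) := by
  induction m with
  | zero => exact chiK_cont K 0 n
  | succ m ih => exact ih.max (chiK_cont K (m+1) n)

lemma snf_cont {K : ℕ → Set CS} {h : ℕ → CS → ℝ} (hh : ∀ m, Continuous (h m)) (n : ℕ) :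
    Continuous (snf K h n) := by
  apply continuous_finset_sum
  intro m _
  cases m with
  | zero => exact (cmax_cont K 0 n).mul (hh 0)
  | succ q => exact ((cmax_cont K (q+1) n).sub (cmax_cont K q n)).mul (hh (q+1))

lemma cmax_le_one (K : ℕ → Set CS) (m n : ℕ) (t : CS) : cmax K m n t ≤ 1 := by
  induction m with
  | zero => exact Lam_le_one _
  | succ m ih => exact max_le ih (Lam_le_one _)

lemma cmax_eq_one {K : ℕ → Set CS} {M : ℕ} {t : CS} (ht : t ∈ K M) {m n : ℕ} (hMm : M ≤ m) :
    cmax K m n t = 1 := by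
  have hchi : chiK K M n t = 1 := by
    rw [chiK, show infDist t (K M) = 0 from le_antisymm
      (by simpa using infDist_le_dist_of_mem (x := t) ht) infDist_nonneg]
    rw [mul_zero, sub_zero]
    exact Lam_of_one_le le_rfl
  apply le_antisymm (cmax_le_one K m n t)
  induction m with
  | zero => rw [Nat.le_zero.1 hMm] at hchi; rw [show cmax K 0 n t = chiK K 0 n t from rfl, hchi]
  | succ m ih =>
    rcases Nat.lt_or_ge M (m+1) with hlt | hge
    · exact le_trans (ih (Nat.lt_succ_iff.1 hlt)) (le_max_left _ _)
    · have : M = m + 1 := le_antisymm hMm hge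
      subst this
      exact hchi ▸ le_max_right _ _

lemma cmax_eq_zero {K : ℕ → Set CS} (hKn : ∀ m, (K m).Nonempty) (hKm : Monotone K)
    {M : ℕ} {t : CS} {ρ : ℝ} (hρ : 0 < ρ) (hρle : ρ ≤ infDist t (K M))
    {m n : ℕ} (hmM : m ≤ M) (hn : 1 ≤ n * ρ) : cmax K m n t = 0 := by
  have hchi : ∀ j ≤ M, chiK K j n t = 0 := by
    intro j hj
    have h1 : infDist t (K M) ≤ infDist t (K j) :=
      infDist_le_infDist_of_subset (hKm hj) (hKn j)
    apply Lam_of_nonpos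
    have : (1:ℝ) ≤ n * infDist t (K j) := by
      calc (1:ℝ) ≤ n * ρ := hn
        _ ≤ n * infDist t (K j) := by
            apply mul_le_mul_of_nonneg_left (le_trans hρle h1) (Nat.cast_nonneg n)
    linarith
  induction m with
  | zero => exact hchi 0 (Nat.zero_le M)
  | succ m ih =>
    show max (cmax K m n t) (chiK K (m+1) n t) = 0
    rw [ih (le_trans (Nat.le_succ m) hmM), hchi (m+1) hmM]
    exact max_self 0


open Classical in
lemma snf_tendsto {K : ℕ → Set CS} (hKn : ∀ m, (K m).Nonempty)
    (hKm : Monotone K) (hKc : ∀ m, IsClosed (K m)) {h : ℕ → CS → ℝ} (a : CS)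
    (hcov : ∃ m, a ∈ K m) :
    Filter.Tendsto (fun n => snf K h n a) atTop (𝓝 (h (Nat.find hcov) a)) := by
  set M := Nat.find hcov with hM
  have haM : a ∈ K M := Nat.find_spec hcov
  obtain ⟨n₀, hn₀⟩ : ∃ n₀, ∀ n, n₀ ≤ n → ∀ m, m < M → cmax K m n a = 0 := by
    cases hMc : M with
    | zero => exact ⟨0, fun n _ m hm => absurd hm (Nat.not_lt_zero m)⟩
    | succ q =>
      have haq : a ∉ K q := Nat.find_min hcov (by omega)
      have hρ : 0 < infDist a (K q) := by
        have : infDist a (K q) ≠ 0 := fun h0 => haq (((hKc q).mem_iff_infDist_zero (hKn q)).2 h0)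
        exact lt_of_le_of_ne infDist_nonneg (Ne.symm this)
      obtain ⟨n₀, hn₀⟩ := exists_nat_ge (1 / infDist a (K q))
      refine ⟨n₀, fun n hn m hm => cmax_eq_zero hKn hKm hρ le_rfl (by omega) ?_⟩
      rw [div_le_iff₀ hρ] at hn₀
      calc (1:ℝ) ≤ n₀ * infDist a (K q) := hn₀
        _ ≤ n * infDist a (K q) := by
            apply mul_le_mul_of_nonneg_right _ (le_of_lt hρ)
            exact_mod_cast hn
  have hev : ∀ n, max n₀ M ≤ n → snf K h n a = h M a := by
    intro n hn
    rw [snf, Finset.sum_eq_single M]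
    · have hwg : swg K M n a = 1 := by
        cases hMc : M with
        | zero => show cmax K 0 n a = 1; exact cmax_eq_one (hMc ▸ haM) le_rfl
        | succ q =>
          show cmax K (q+1) n a - cmax K q n a = 1
          rw [cmax_eq_one (hMc ▸ haM) le_rfl, hn₀ n (le_trans (le_max_left _ _) hn) q (by omega)]
          ring
      rw [hwg, one_mul]
    · intro m hmmem hmne
      rcases Nat.lt_or_ge m M with hlt | hge
      · have hwg : swg K m n a = 0 := by
          cases m with
          | zero => exact hn₀ n (le_trans (le_max_left _ _) hn) 0 hlt
          | succ p =>
            show cmax K (p+1) n a - cmax K p n a = 0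
            rw [hn₀ n (le_trans (le_max_left _ _) hn) (p+1) hlt,
              hn₀ n (le_trans (le_max_left _ _) hn) p (by omega)]
            ring
        rw [hwg, zero_mul]
      · have hgt : M < m := lt_of_le_of_ne hge (Ne.symm hmne)
        obtain ⟨p, rfl⟩ : ∃ p, m = p + 1 := ⟨m - 1, by omega⟩
        have hwg : swg K (p+1) n a = 0 := by
          show cmax K (p+1) n a - cmax K p n a = 0
          rw [cmax_eq_one haM (by omega), cmax_eq_one haM (by omega)]
          ring
        rw [hwg, zero_mul]
    · intro hMn
      exact absurd (Finset.mem_range.2 (by omega)) hMn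
  apply Filter.Tendsto.congr' _ tendsto_const_nhds
  filter_upwards [eventually_ge_atTop (max n₀ M)] with n hn
  exact (hev n hn).symm


/-! ### the key construction at a fixed accuracy -/

open Classical in
lemma key0 (A : ℕ → Set CS) (hA : (⋃ n, A n) = Set.univ) (v : CS → ℝ) (g : ℕ → CS → ℝ)
    (hgc : ∀ n, Continuous (g n))
    (hgl : ∀ t, Filter.Tendsto (fun n => g n t) atTop (𝓝 (v t)))
    {δ : ℝ} (hδ : 0 < δ) :
    ∃ (U : XA A → ℝ) (s : CS → ℝ),
      Continuous U ∧ (∀ a : CS, U (fun _ => a) = s a) ∧ (∀ a, |v a - s a| ≤ δ) ∧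
      ∃ g' : ℕ → CS → ℝ, (∀ n, Continuous (g' n)) ∧
        ∀ t, Filter.Tendsto (fun n => g' n t) atTop (𝓝 (s t)) := by
  have t₀ : CS := ⟨0, zero_mem_cantorSet⟩
  have hcov0 : ∀ t : CS, ∃ m, t ∈ KK g δ m := KK_cover hgl hδ
  set M₀ := (hcov0 t₀).choose with hM₀
  set K : ℕ → Set CS := fun m => KK g δ (m + M₀) with hK
  have hKc : ∀ m, IsClosed (K m) := fun m => KK_closed hgc δ _
  have hKn : ∀ m, (K m).Nonempty :=
    fun m => ⟨t₀, KK_mono g δ (Nat.le_add_left M₀ m) (hcov0 t₀).choose_spec⟩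
  have hKm : Monotone K := fun m m' hmm => KK_mono g δ (by omega)
  have hcov : ∀ t : CS, ∃ m, t ∈ K m := by
    intro t
    obtain ⟨m, hm⟩ := hcov0 t
    exact ⟨m, KK_mono g δ (Nat.le_add_right m M₀) hm⟩
  set h : ℕ → CS → ℝ := fun m t => g (m + M₀) t with hh'
  have hh : ∀ m, Continuous (h m) := fun m => hgc (m + M₀)
  have hacc : ∀ m, ∀ a ∈ K m, |v a - h m a| ≤ δ := by
    intro m a ha
    have := KK_acc hgl ha
    rwa [Real.dist_eq] at this
  refine ⟨UL A K h, fun a => h (Nat.find (hcov a)) a,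
    UL_cont hA hKc hKn hKm hh hcov, ?_, ?_, ?_⟩
  · intro a; exact UL_diag hKm a (hcov a)
  · intro a; exact hacc _ a (Nat.find_spec (hcov a))
  · exact ⟨snf K h, snf_cont hh, fun t => snf_tendsto hKn hKm hKc t (hcov t)⟩

open Classical in
lemma keyB (A : ℕ → Set CS) (hA : (⋃ n, A n) = Set.univ) (v : CS → ℝ) (g : ℕ → CS → ℝ)
    (hgc : ∀ n, Continuous (g n))
    (hgl : ∀ t, Filter.Tendsto (fun n => g n t) atTop (𝓝 (v t)))
    {δ c : ℝ} (hδ : 0 < δ) (hvb : ∀ t, |v t| ≤ c) :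
    ∃ (U : XA A → ℝ) (s : CS → ℝ),
      Continuous U ∧ (∀ y, |U y| ≤ c) ∧
      (∀ a : CS, U (fun _ => a) = s a) ∧ (∀ a, |v a - s a| ≤ δ) ∧
      ∃ g' : ℕ → CS → ℝ, (∀ n, Continuous (g' n)) ∧
        ∀ t, Filter.Tendsto (fun n => g' n t) atTop (𝓝 (s t)) := by
  have t₀ : CS := ⟨0, zero_mem_cantorSet⟩
  have hc : 0 ≤ c := le_trans (abs_nonneg _) (hvb t₀)
  have hcov0 : ∀ t : CS, ∃ m, t ∈ KK g δ m := KK_cover hgl hδ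
  set M₀ := (hcov0 t₀).choose with hM₀
  set K : ℕ → Set CS := fun m => KK g δ (m + M₀) with hK
  have hKc : ∀ m, IsClosed (K m) := fun m => KK_closed hgc δ _
  have hKn : ∀ m, (K m).Nonempty :=
    fun m => ⟨t₀, KK_mono g δ (Nat.le_add_left M₀ m) (hcov0 t₀).choose_spec⟩
  have hKm : Monotone K := fun m m' hmm => KK_mono g δ (by omega)
  have hcov : ∀ t : CS, ∃ m, t ∈ K m := by
    intro t
    obtain ⟨m, hm⟩ := hcov0 t
    exact ⟨m, KK_mono g δ (Nat.le_add_right m M₀) hm⟩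
  set h : ℕ → CS → ℝ := fun m t => clampR c (g (m + M₀) t) with hh'
  have hh : ∀ m, Continuous (h m) := fun m => (clampR_cont c).comp (hgc (m + M₀))
  have hb : ∀ m t, |h m t| ≤ c := fun m t => abs_clampR_le hc _
  have hacc : ∀ m, ∀ a ∈ K m, |v a - h m a| ≤ δ := by
    intro m a ha
    have h1 := KK_acc hgl ha
    rw [Real.dist_eq] at h1
    exact le_trans (clampR_dist (hvb a)) h1
  refine ⟨UL A K h, fun a => h (Nat.find (hcov a)) a,
    UL_cont hA hKc hKn hKm hh hcov, ?_, ?_, ?_, ?_⟩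
  · intro y; exact UL_abs_le hb (hcov (y 0))
  · intro a; exact UL_diag hKm a (hcov a)
  · intro a; exact hacc _ a (Nat.find_spec (hcov a))
  · exact ⟨snf K h, snf_cont hh, fun t => snf_tendsto hKn hKm hKc t (hcov t)⟩


/-! ### the recursive correction scheme -/

structure BDk (k : ℕ) : Type where
  w : CS → ℝ
  g : ℕ → CS → ℝ
  gcont : ∀ n, Continuous (g n)
  glim : ∀ t, Filter.Tendsto (fun n => g n t) atTop (𝓝 (w t))
  bd : ∀ t, |w t| ≤ (2⁻¹ : ℝ) ^ k

lemma step (A : ℕ → Set CS) (hA : (⋃ n, A n) = Set.univ) (k : ℕ) (b : BDk k) :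
    ∃ (U : XA A → ℝ) (b' : BDk (k+1)),
      Continuous U ∧ (∀ y, |U y| ≤ (2⁻¹ : ℝ) ^ k) ∧
      ∀ a : CS, U (fun _ => a) = b.w a - b'.w a := by
  obtain ⟨U, s, hUc, hUb, hUd, hacc, g', hg'c, hg'l⟩ :=
    keyB A hA b.w b.g b.gcont b.glim (δ := (2⁻¹ : ℝ) ^ (k+1)) (by positivity) b.bd
  exact ⟨U, ⟨fun a => b.w a - s a, fun n t => b.g n t - g' n t,
    fun n => (b.gcont n).sub (hg'c n), fun t => (b.glim t).sub (hg'l t), hacc⟩,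
    hUc, hUb, fun a => by rw [hUd a]; show s a = b.w a - (b.w a - s a); ring⟩

noncomputable def stepD (A : ℕ → Set CS) (hA : (⋃ n, A n) = Set.univ) (k : ℕ) (b : BDk k) :
    (XA A → ℝ) × BDk (k+1) :=
  ⟨(step A hA k b).choose, (step A hA k b).choose_spec.choose⟩

lemma stepD_spec (A : ℕ → Set CS) (hA : (⋃ n, A n) = Set.univ) (k : ℕ) (b : BDk k) :
    Continuous (stepD A hA k b).1 ∧ (∀ y, |(stepD A hA k b).1 y| ≤ (2⁻¹ : ℝ) ^ k) ∧
    ∀ a : CS, (stepD A hA k b).1 (fun _ => a) = b.w a - (stepD A hA k b).2.w a :=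
  (step A hA k b).choose_spec.choose_spec

noncomputable def chain (A : ℕ → Set CS) (hA : (⋃ n, A n) = Set.univ) (b1 : BDk 0) :
    ∀ k : ℕ, BDk k
  | 0 => b1
  | (k+1) => (stepD A hA k (chain A hA b1 k)).2

noncomputable def Useq (A : ℕ → Set CS) (hA : (⋃ n, A n) = Set.univ) (b1 : BDk 0) (k : ℕ) :
    XA A → ℝ :=
  (stepD A hA k (chain A hA b1 k)).1

lemma Useq_spec (A : ℕ → Set CS) (hA : (⋃ n, A n) = Set.univ) (b1 : BDk 0) (k : ℕ) :
    Continuous (Useq A hA b1 k) ∧ (∀ y, |Useq A hA b1 k y| ≤ (2⁻¹ : ℝ) ^ k) ∧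
    ∀ a : CS, Useq A hA b1 k (fun _ => a) =
      (chain A hA b1 k).w a - (chain A hA b1 (k+1)).w a :=
  stepD_spec A hA k (chain A hA b1 k)

end StmtAux

/-- Let `(Aₙ)` cover the Cantor set `C`, let `Xₙ` be `C` with the topology
refined by the singletons of `Aₙ`, and let `X = ∏ₙ Xₙ`.  Then for every Baire one function
`v : C → ℝ` (standard topology) there is a continuous `u : X → ℝ` with `u(a, a, …) = v(a)`
for all `a ∈ C`. -/
theorem stmt17 (A : ℕ → Set ↥cantorSet) (hA : (⋃ n, A n) = Set.univ)
    (v : ↥cantorSet → ℝ) (hv : BaireOne v) :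
    ∃ u : (ℕ → ↥cantorSet) → ℝ,
      @Continuous _ _ (refinedProdTop A) _ u ∧
      ∀ a : ↥cantorSet, u (fun _ => a) = v a := by
  obtain ⟨g, hgc, hgl⟩ := hv
  obtain ⟨U0, s0, hU0c, hU0d, hacc0, g1, hg1c, hg1l⟩ :=
    key0 A hA v g hgc hgl (δ := 1) one_pos
  set b1 : BDk 0 := ⟨fun a => v a - s0 a, fun n t => g n t - g1 n t,
    fun n => (hgc n).sub (hg1c n), fun t => (hgl t).sub (hg1l t),
    fun t => by simpa using hacc0 t⟩ with hb1
  have hsum : Summable (fun k : ℕ => (2⁻¹ : ℝ) ^ k) :=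
    summable_geometric_of_lt_one (by norm_num) (by norm_num)
  set u : XA A → ℝ := fun y => U0 y + ∑' k, Useq A hA b1 k y with hu
  have hucont : Continuous u := by
    apply hU0c.add
    apply continuous_tsum (fun k => (Useq_spec A hA b1 k).1) hsum
    intro k y
    rw [Real.norm_eq_abs]
    exact (Useq_spec A hA b1 k).2.1 y
  have hudiag : ∀ a : CS, u (fun _ => a) = v a := by
    intro a
    have hterm : ∀ k, Useq A hA b1 k (fun _ => a) =
        (chain A hA b1 k).w a - (chain A hA b1 (k+1)).w a :=
      fun k => (Useq_spec A hA b1 k).2.2 a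
    have hzero : Filter.Tendsto (fun k => (chain A hA b1 k).w a) atTop (𝓝 0) := by
      apply squeeze_zero_norm _ (tendsto_pow_atTop_nhds_zero_of_lt_one (by norm_num : (0:ℝ) ≤ 2⁻¹) (by norm_num))
      intro k
      rw [Real.norm_eq_abs]
      exact (chain A hA b1 k).bd a
    have hsummable : Summable (fun k => Useq A hA b1 k (fun _ => a)) := by
      apply Summable.of_abs
      apply Summable.of_nonneg_of_le (fun k => abs_nonneg _) _ hsum
      intro k
      exact (Useq_spec A hA b1 k).2.1 _
    have htel : Filter.Tendsto
        (fun K => ∑ k ∈ Finset.range K, Useq A hA b1 k (fun _ => a)) atTop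
        (𝓝 ((chain A hA b1 0).w a)) := by
      have he : ∀ K, ∑ k ∈ Finset.range K, Useq A hA b1 k (fun _ => a) =
          (chain A hA b1 0).w a - (chain A hA b1 K).w a := by
        intro K
        rw [Finset.sum_congr rfl (fun k _ => hterm k)]
        exact Finset.sum_range_sub' (fun k => (chain A hA b1 k).w a) K
      simp_rw [he]
      simpa using tendsto_const_nhds.sub hzero
    have hts : ∑' k, Useq A hA b1 k (fun _ => a) = (chain A hA b1 0).w a :=
      ((hsummable.hasSum_iff_tendsto_nat).2 htel).tsum_eq
    rw [hu]
    show U0 (fun _ => a) + ∑' k, Useq A hA b1 k (fun _ => a) = v a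
    rw [hU0d a, hts]
    show s0 a + (v a - s0 a) = v a
    ring
  exact ⟨u, hucont, hudiag⟩
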